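/- Let Ŷ ∈ ℝ^{n×m}, F ⊆ ℝ^{n×m} nonempty closed, and for a quadratic q_k(Y) = tr(Yᵀ A_k Y) + 2 tr(B_kᵀ Y) + c_k define the expanded function q̃_k(Ŷ) = q_k(Ŷ) + ‖∇q_k(Ŷ)‖_F d_F(Ŷ) + ‖A_k‖₂ d_F(Ŷ)². Then for every Y ∈ ℝ^{n×m} with ‖Y − Ŷ‖_F ≤ d_F(Ŷ), one has q_k(Y) ≤ q̃_k(Ŷ). In particular, if q̃_k(Ŷ) < 0 (i.e., constraint k is not quasi-binding), then every closest point of F to Ŷ strictly satisfies the inequality constraint q_k(Y) < 0. -/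

import Mathlib

open Matrix Finset

/-- Frobenius norm of a real matrix. -/
noncomputable def frob {n m : ℕ} (M : Matrix (Fin n) (Fin m) ℝ) : ℝ :=
  Real.sqrt (∑ i, ∑ j, (M i j) ^ 2)

/-- Spectral (operator) norm of a square real matrix. -/
noncomputable def spec {n : ℕ} (A : Matrix (Fin n) (Fin n) ℝ) : ℝ :=
  ‖Matrix.toEuclideanCLM (𝕜 := ℝ) A‖

/-- Euclidean norm of a finitely-indexed real vector. -/
noncomputable def euc {ι : Type*} [Fintype ι] (x : ι → ℝ) : ℝ :=
  Real.sqrt (∑ i, (x i) ^ 2)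

/-- The quadratic function q(Y) = tr(Yᵀ A Y) + 2 tr(Bᵀ Y) + c. -/
noncomputable def quadF {n m : ℕ} (A : Matrix (Fin n) (Fin n) ℝ)
    (B : Matrix (Fin n) (Fin m) ℝ) (c : ℝ) (Y : Matrix (Fin n) (Fin m) ℝ) : ℝ :=
  (Yᵀ * A * Y).trace + 2 * (Bᵀ * Y).trace + c

/-- The gradient ∇q(Y) = 2(AY + B). -/
noncomputable def gradF {n m : ℕ} (A : Matrix (Fin n) (Fin n) ℝ)
    (B Y : Matrix (Fin n) (Fin m) ℝ) : Matrix (Fin n) (Fin m) ℝ :=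
  (2 : ℝ) • (A * Y + B)

/-- Frobenius distance from a point to a set of matrices. -/
noncomputable def distF {n m : ℕ} (F : Set (Matrix (Fin n) (Fin m) ℝ))
    (Z : Matrix (Fin n) (Fin m) ℝ) : ℝ :=
  sInf ((fun Y => frob (Y - Z)) '' F)

/-- Smallest singular value: σ_min(J) = inf{‖Jᵀξ‖₂ : ‖ξ‖₂ = 1}. -/
noncomputable def sigMin {ι κ : Type*} [Fintype ι] [Fintype κ] (J : Matrix ι κ ℝ) : ℝ :=
  sInf {r | ∃ ξ : ι → ℝ, euc ξ = 1 ∧ r = euc (J.transpose.mulVec ξ)}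

/-- Spectral norm of a rectangular matrix: sup{‖Jx‖₂ : ‖x‖₂ = 1}. -/
noncomputable def specR {ι κ : Type*} [Fintype ι] [Fintype κ] (J : Matrix ι κ ℝ) : ℝ :=
  sSup {r | ∃ x : κ → ℝ, euc x = 1 ∧ r = euc (J.mulVec x)}

/-- Maximum absolute row-sum norm ‖M‖₁. -/
noncomputable def rowNorm {n : ℕ} (A : Matrix (Fin n) (Fin n) ℝ) : ℝ :=
  ⨆ i, ∑ j, |A i j|


/-! The Taylor expansion of a quadratic is exact:
`q(Ŷ + Δ) = q(Ŷ) + tr(∇q(Ŷ)ᵀ Δ) + tr(Δᵀ A Δ)`. The linear term is at most `‖∇q(Ŷ)‖_F ‖Δ‖_F`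
by Cauchy–Schwarz, and the quadratic term, read column by column, at most `‖A‖₂ ‖Δ‖_F²`;
both are monotone in `‖Δ‖_F`, so they are bounded at `‖Δ‖_F = d_F(Ŷ)`. -/

lemma frob_sq {n m : ℕ} (M : Matrix (Fin n) (Fin m) ℝ) :
    frob M ^ 2 = ∑ i, ∑ j, M i j ^ 2 :=
  Real.sq_sqrt (by positivity)

lemma frob_sq_eq_sum_dotProduct_col {n m : ℕ} (M : Matrix (Fin n) (Fin m) ℝ) :
    frob M ^ 2 = ∑ j, Mᵀ j ⬝ᵥ Mᵀ j := by
  rw [frob_sq, Finset.sum_comm]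
  simp only [dotProduct, transpose_apply, sq]

lemma trace_transpose_mul_le_frob_mul_frob {n m : ℕ} (M N : Matrix (Fin n) (Fin m) ℝ) :
    (Mᵀ * N).trace ≤ frob M * frob N := by
  have hsum : (Mᵀ * N).trace = ∑ p : Fin n × Fin m, M p.1 p.2 * N p.1 p.2 := by
    simp only [trace, Matrix.diag, mul_apply, transpose_apply, Fintype.sum_prod_type]
    exact Finset.sum_comm
  have hfrob (K : Matrix (Fin n) (Fin m) ℝ) : frob K = √(∑ p : Fin n × Fin m, K p.1 p.2 ^ 2) := by
    rw [frob, Fintype.sum_prod_type]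
  rw [hsum, hfrob M, hfrob N]
  exact Real.sum_mul_le_sqrt_mul_sqrt _ _ _

lemma dotProduct_mulVec_self_le_spec {n : ℕ} (A : Matrix (Fin n) (Fin n) ℝ) (x : Fin n → ℝ) :
    x ⬝ᵥ A *ᵥ x ≤ spec A * (x ⬝ᵥ x) := by
  set v : EuclideanSpace ℝ (Fin n) := WithLp.toLp 2 x
  have hv : ‖v‖ ^ 2 = x ⬝ᵥ x := by
    rw [← real_inner_self_eq_norm_sq, EuclideanSpace.inner_eq_star_dotProduct]; rfl
  calc x ⬝ᵥ A *ᵥ x = inner ℝ v (toEuclideanCLM (𝕜 := ℝ) A v) := (inner_toEuclideanCLM A v v).symm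
    _ ≤ ‖v‖ * ‖toEuclideanCLM (𝕜 := ℝ) A v‖ := real_inner_le_norm _ _
    _ ≤ ‖v‖ * (spec A * ‖v‖) := by gcongr; exact (toEuclideanCLM (𝕜 := ℝ) A).le_opNorm v
    _ = spec A * (x ⬝ᵥ x) := by rw [← hv]; ring

lemma trace_transpose_mul_mul_self_le_spec {n m : ℕ} (A : Matrix (Fin n) (Fin n) ℝ)
    (M : Matrix (Fin n) (Fin m) ℝ) :
    (Mᵀ * A * M).trace ≤ spec A * frob M ^ 2 := by
  have hcols : (Mᵀ * A * M).trace = ∑ j, Mᵀ j ⬝ᵥ A *ᵥ Mᵀ j := by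
    rw [Matrix.mul_assoc]
    simp only [trace, Matrix.diag, mul_apply, mulVec, dotProduct, transpose_apply]
  rw [hcols, frob_sq_eq_sum_dotProduct_col, Finset.mul_sum]
  exact Finset.sum_le_sum fun j _ => dotProduct_mulVec_self_le_spec A (Mᵀ j)

lemma quadF_add {n m : ℕ} {A : Matrix (Fin n) (Fin n) ℝ} (hA : A.IsSymm)
    (B : Matrix (Fin n) (Fin m) ℝ) (c : ℝ) (Y Δ : Matrix (Fin n) (Fin m) ℝ) :
    quadF A B c (Y + Δ) =
      quadF A B c Y + ((gradF A B Y)ᵀ * Δ).trace + (Δᵀ * A * Δ).trace := by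
  have hcross : (Yᵀ * A * Δ).trace = (Δᵀ * A * Y).trace := by
    rw [← trace_transpose, transpose_mul, transpose_mul, transpose_transpose, hA.eq,
      Matrix.mul_assoc]
  have hgrad : (Yᵀ * Aᵀ * Δ).trace = (Yᵀ * A * Δ).trace := by rw [hA.eq]
  simp only [quadF, gradF, transpose_add, transpose_smul, transpose_mul, Matrix.add_mul,
    Matrix.mul_add, Matrix.smul_mul, trace_add, trace_smul, smul_eq_mul] at hgrad ⊢
  linarith

lemma quadF_le_of_frob_sub_le {n m : ℕ} {A : Matrix (Fin n) (Fin n) ℝ} (hA : A.IsSymm)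
    (B : Matrix (Fin n) (Fin m) ℝ) (c : ℝ) {Y Ŷ : Matrix (Fin n) (Fin m) ℝ} {r : ℝ}
    (hr : frob (Y - Ŷ) ≤ r) :
    quadF A B c Y ≤ quadF A B c Ŷ + frob (gradF A B Ŷ) * r + spec A * r ^ 2 := by
  have hΔ : 0 ≤ frob (Y - Ŷ) := Real.sqrt_nonneg _
  have hlin : ((gradF A B Ŷ)ᵀ * (Y - Ŷ)).trace ≤ frob (gradF A B Ŷ) * r :=
    (trace_transpose_mul_le_frob_mul_frob _ _).trans
      (mul_le_mul_of_nonneg_left hr (Real.sqrt_nonneg _))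
  have hquad : ((Y - Ŷ)ᵀ * A * (Y - Ŷ)).trace ≤ spec A * r ^ 2 :=
    (trace_transpose_mul_mul_self_le_spec A _).trans (by gcongr; exact norm_nonneg _)
  rw [← add_sub_cancel Ŷ Y, quadF_add hA]
  linarith

theorem expanded_function_bound_general {n m : ℕ}
    (F : Set (Matrix (Fin n) (Fin m) ℝ))
    (A : Matrix (Fin n) (Fin n) ℝ) (hA : A.IsSymm)
    (B : Matrix (Fin n) (Fin m) ℝ) (c : ℝ)
    (Ych : Matrix (Fin n) (Fin m) ℝ) :
    (∀ Y : Matrix (Fin n) (Fin m) ℝ, frob (Y - Ych) ≤ distF F Ych →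
      quadF A B c Y ≤ quadF A B c Ych +
        frob (gradF A B Ych) * distF F Ych + spec A * (distF F Ych) ^ 2) ∧
    ((quadF A B c Ych + frob (gradF A B Ych) * distF F Ych +
        spec A * (distF F Ych) ^ 2 < 0) →
      ∀ Y ∈ F, frob (Y - Ych) = distF F Ych → quadF A B c Y < 0) :=
  ⟨fun _ hY => quadF_le_of_frob_sub_le hA B c hY,
    fun hneg _ _ hY => (quadF_le_of_frob_sub_le hA B c hY.le).trans_lt hneg⟩

theorem expanded_function_bound {n m : ℕ}
    (F : Set (Matrix (Fin n) (Fin m) ℝ)) (hFne : F.Nonempty) (hFcl : IsClosed F)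
    (A : Matrix (Fin n) (Fin n) ℝ) (hA : A.IsSymm)
    (B : Matrix (Fin n) (Fin m) ℝ) (c : ℝ)
    (Ych : Matrix (Fin n) (Fin m) ℝ) :
    (∀ Y : Matrix (Fin n) (Fin m) ℝ, frob (Y - Ych) ≤ distF F Ych →
      quadF A B c Y ≤ quadF A B c Ych +
        frob (gradF A B Ych) * distF F Ych + spec A * (distF F Ych) ^ 2) ∧
    ((quadF A B c Ych + frob (gradF A B Ych) * distF F Ych +
        spec A * (distF F Ych) ^ 2 < 0) →
      ∀ Y ∈ F, frob (Y - Ych) = distF F Ych → quadF A B c Y < 0) :=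
  expanded_function_bound_general F A hA B c Ych
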